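/- arXiv:2103.17036 — 13 statements merged into one kernel-verified Lean document; each statement's English description precedes it below -/
import Mathlib

section
/- Let a, b, c, m, n, μ, ν be integers with μ·m + ν·n = 1, and set M = a·m² + 2b·m·n + c·n². Then (μ·(b·m + c·n) − ν·(a·m + b·n))² ≡ b² − a·c (mod M). In particular, if M is represented by the form (a,b,c) with coprime values of the indeterminates, then the determinant b² − a·c is a quadratic residue modulo M. -/
theorem stmt_0 (a b c m n μ ν : ℤ) (h : μ * m + ν * n = 1)
    (M : ℤ) (hM : M = a * m ^ 2 + 2 * b * m * n + c * n ^ 2) :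
    (μ * (b * m + c * n) - ν * (a * m + b * n)) ^ 2 ≡ b ^ 2 - a * c [ZMOD M] := by
  have key : (μ * (b * m + c * n) - ν * (a * m + b * n)) ^ 2 - (b ^ 2 - a * c)
      = M * (c * μ ^ 2 - 2 * b * μ * ν + a * ν ^ 2) := by
    linear_combination ((b ^ 2 - a * c) * (μ * m + ν * n + 1)) * h
      - (c * μ ^ 2 - 2 * b * μ * ν + a * ν ^ 2) * hM
  exact Int.ModEq.symm (Int.modEq_iff_dvd.mpr ⟨_, key⟩)
end

section
/- Let a, b, c, m, n, μ, ν, μ', ν' be integers with μ·m + ν·n = 1 and μ'·m + ν'·n = 1, and set M = a·m² + 2b·m·n + c·n², ϑ = μ·(b·m + c·n) − ν·(a·m + b·n), ϑ' = μ'·(b·m + c·n) − ν'·(a·m + b·n). Then ϑ' − ϑ = (μ'·ν − μ·ν')·M; in particular ϑ' ≡ ϑ (mod M), so the value of the square root of b² − a·c modulo M attached to the representation does not depend on the choice of μ, ν. -/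
theorem stmt_2 (a b c m n μ ν μ' ν' : ℤ)
    (h : μ * m + ν * n = 1) (h' : μ' * m + ν' * n = 1)
    (M ϑ ϑ' : ℤ)
    (hM : M = a * m ^ 2 + 2 * b * m * n + c * n ^ 2)
    (hϑ : ϑ = μ * (b * m + c * n) - ν * (a * m + b * n))
    (hϑ' : ϑ' = μ' * (b * m + c * n) - ν' * (a * m + b * n)) :
    ϑ' - ϑ = (μ' * ν - μ * ν') * M ∧ ϑ' ≡ ϑ [ZMOD M] := by
  have key : ϑ' - ϑ = (μ' * ν - μ * ν') * M := by
    subst hM hϑ hϑ'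
    linear_combination (μ * (b * m + c * n) - ν * (a * m + b * n)) * h' -
      (μ' * (b * m + c * n) - ν' * (a * m + b * n)) * h
  exact ⟨key, (Int.modEq_iff_dvd.mpr ⟨μ' * ν - μ * ν', by linear_combination key⟩).symm⟩
end

section
/- Suppose the form F = (a,b,c) has nonzero determinant b² − a·c, that F implies the form F' = (a',b',c') via a substitution with determinant e = α·δ − β·γ, and that F' also implies F. Then the two forms have equal determinants, b'² − a'·c' = b² − a·c, and e² = 1. -/
/-- The form `(a,b,c)` is transformed into the form `(a',b',c')` by the integer
substitution `x = α x' + β y'`, `y = γ x' + δ y'`. -/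
def Transforms (a b c a' b' c' α β γ δ : ℤ) : Prop :=
  a' = a * α ^ 2 + 2 * b * α * γ + c * γ ^ 2 ∧
  b' = a * α * β + b * (α * δ + β * γ) + c * γ * δ ∧
  c' = a * β ^ 2 + 2 * b * β * δ + c * δ ^ 2

theorem stmt_6 (a b c a' b' c' α β γ δ e : ℤ)
    (hD : b ^ 2 - a * c ≠ 0)
    (h1 : Transforms a b c a' b' c' α β γ δ)
    (he : e = α * δ - β * γ)
    (h2 : ∃ α' β' γ' δ' : ℤ, Transforms a' b' c' a b c α' β' γ' δ') :
    b' ^ 2 - a' * c' = b ^ 2 - a * c ∧ e ^ 2 = 1 := by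
  obtain ⟨ha', hb', hc'⟩ := h1
  obtain ⟨α', β', γ', δ', ha, hb, hc⟩ := h2
  have key : b' ^ 2 - a' * c' = (b ^ 2 - a * c) * e ^ 2 := by
    rw [ha', hb', hc', he]; ring
  have key2 : b ^ 2 - a * c = (b' ^ 2 - a' * c') * (α' * δ' - β' * γ') ^ 2 := by
    conv_lhs => rw [hb, ha, hc]
    ring
  have h3 : (b ^ 2 - a * c) * 1 = (b ^ 2 - a * c) * (e ^ 2 * (α' * δ' - β' * γ') ^ 2) := by
    conv_lhs => rw [mul_one, key2, key]
    ring
  have h4 : e ^ 2 * (α' * δ' - β' * γ') ^ 2 = 1 := (mul_left_cancel₀ hD h3).symm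
  have he2 : e ^ 2 = 1 := by
    rcases Int.eq_one_of_mul_eq_one_right (sq_nonneg e) h4 with h
    exact h
  exact ⟨by rw [key, he2, mul_one], he2⟩
end

section
/- Contiguous forms are properly equivalent: if (a,b,c) and (a',b',c') are binary quadratic forms with the same determinant, with c ≠ 0, a' = c and b' ≡ −b (mod c), then (a,b,c) and (a',b',c') are properly equivalent. -/
/-- Two forms are properly equivalent if each can be transformed into the other
by an integer substitution of determinant `1`. -/
def ProperlyEquivalent (a b c a' b' c' : ℤ) : Prop :=
  (∃ α β γ δ : ℤ, Transforms a b c a' b' c' α β γ δ ∧ α * δ - β * γ = 1) ∧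
  (∃ α β γ δ : ℤ, Transforms a' b' c' a b c α β γ δ ∧ α * δ - β * γ = 1)

theorem stmt_7 (a b c a' b' c' : ℤ)
    (hdet : b' ^ 2 - a' * c' = b ^ 2 - a * c)
    (hc : c ≠ 0) (ha' : a' = c) (hb' : b' ≡ -b [ZMOD c]) :
    ProperlyEquivalent a b c a' b' c' := by
  obtain ⟨k, hk⟩ := hb'.dvd
  have hb'eq : b' = -b - c * k := by linarith
  have hc' : c' = a + 2*b*k + c*k^2 := by
    have h : c * (c' - (a + 2*b*k + c*k^2)) = 0 := by
      rw [hb'eq, ha'] at hdet; ring_nf at hdet ⊢; linarith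
    rcases mul_eq_zero.mp h with h | h
    · exact absurd h hc
    · linarith
  exact ⟨⟨0, -1, 1, -k, ⟨by rw [ha']; ring, by rw [hb'eq]; ring, by rw [hc']; ring⟩, by ring⟩,
         ⟨-k, 1, -1, 0, ⟨by rw [ha', hb'eq, hc']; ring, by rw [ha', hb'eq]; ring, by rw [ha']; ring⟩, by ring⟩⟩
end

section
/- Let a, b, c, m, n, μ, ν be integers with μ·m + ν·n = 1, let D = b² − a·c, set M = a·m² + 2b·m·n + c·n² and N = μ·(b·m + c·n) − ν·(a·m + b·n), and assume M ≠ 0. Then M divides N² − D, and the forms (a,b,c) and (M, N, (N² − D)/M) are properly equivalent. -/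
theorem stmt_8 (a b c m n μ ν D M N : ℤ)
    (h : μ * m + ν * n = 1)
    (hD : D = b ^ 2 - a * c)
    (hM : M = a * m ^ 2 + 2 * b * m * n + c * n ^ 2)
    (hN : N = μ * (b * m + c * n) - ν * (a * m + b * n))
    (hM0 : M ≠ 0) :
    M ∣ N ^ 2 - D ∧ ProperlyEquivalent a b c M N ((N ^ 2 - D) / M) := by
  have key : N ^ 2 - D = M * (a * ν ^ 2 - 2 * b * ν * μ + c * μ ^ 2) := by
    subst hD hM hN
    linear_combination ((b ^ 2 - a * c) * (μ * m + ν * n + 1)) * h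
  have hdvd : M ∣ N ^ 2 - D := ⟨_, key⟩
  have hq : (N ^ 2 - D) / M = a * ν ^ 2 - 2 * b * ν * μ + c * μ ^ 2 := by
    rw [key, Int.mul_ediv_cancel_left _ hM0]
  refine ⟨hdvd, ?_, ?_⟩
  · refine ⟨m, -ν, n, μ, ⟨?_, ?_, ?_⟩, ?_⟩
    · exact hM
    · rw [hN]; ring
    · rw [hq]; ring
    · linarith
  · refine ⟨μ, ν, -n, m, ⟨?_, ?_, ?_⟩, ?_⟩
    · rw [hq, hM, hN]
      linear_combination (-(a * (μ * m + ν * n + 1))) * h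
    · rw [hq, hM, hN]
      linear_combination (-(b * (μ * m + ν * n + 1))) * h
    · rw [hq, hM, hN]
      linear_combination (-(c * (μ * m + ν * n + 1))) * h
    · linarith
end

section
/- Let (a,b,c) be a binary quadratic form whose determinant b² − a·c equals −D with D a positive integer. Then there exists a reduced form (A,B,C) of the same determinant −D that is properly equivalent to (a,b,c); here reduced means 2·|B| ≤ |A| ≤ |C| (so in particular 3·A² ≤ 4·D). -/
lemma step_equiv (a b c a' b' c' α β γ δ : ℤ)
    (h : α * δ - β * γ = 1)
    (h1 : a' = a * α ^ 2 + 2 * b * α * γ + c * γ ^ 2)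
    (h2 : b' = a * α * β + b * (α * δ + β * γ) + c * γ * δ)
    (h3 : c' = a * β ^ 2 + 2 * b * β * δ + c * δ ^ 2) :
    ProperlyEquivalent a b c a' b' c' := by
  constructor
  · exact ⟨α, β, γ, δ, ⟨h1, h2, h3⟩, h⟩
  · refine ⟨δ, -β, -γ, α, ⟨?_, ?_, ?_⟩, by linarith⟩
    · subst h1 h2 h3; linear_combination (-a*(α*δ-β*γ+1)) * h
    · subst h1 h2 h3; linear_combination (-b*(α*δ-β*γ+1)) * h
    · subst h1 h2 h3; linear_combination (-c*(α*δ-β*γ+1)) * h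

lemma pe_trans {a b c a' b' c' a2 b2 c2 : ℤ}
    (H1 : ProperlyEquivalent a b c a' b' c')
    (H2 : ProperlyEquivalent a' b' c' a2 b2 c2) :
    ProperlyEquivalent a b c a2 b2 c2 := by
  obtain ⟨⟨α, β, γ, δ, ⟨rfl, rfl, rfl⟩, hM⟩, -⟩ := H1
  obtain ⟨⟨α', β', γ', δ', ⟨h1, h2, h3⟩, hN⟩, -⟩ := H2
  apply step_equiv _ _ _ _ _ _ (α*α'+β*γ') (α*β'+β*δ') (γ*α'+δ*γ') (γ*β'+δ*δ')
  · linear_combination (α'*δ'-β'*γ') * hM + hN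
  · rw [h1]; ring
  · rw [h2]; ring
  · rw [h3]; ring

theorem key (D : ℤ) (hD : 0 < D) : ∀ n : ℕ, ∀ a b c : ℤ, a.natAbs = n →
    b ^ 2 - a * c = -D →
    ∃ A B C : ℤ, B ^ 2 - A * C = -D ∧
      2 * |B| ≤ |A| ∧ |A| ≤ |C| ∧ 3 * A ^ 2 ≤ 4 * D ∧
      ProperlyEquivalent a b c A B C := by
  intro n
  induction n using Nat.strong_induction_on with
  | _ n ih =>
    intro a b c hn hdet
    have ha : a ≠ 0 := by
      intro h; subst h; nlinarith [sq_nonneg b]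
    have hma : (0:ℤ) < |a| := abs_pos.mpr ha
    -- find t with 2*|b + a*t| ≤ |a|
    obtain ⟨t0, ht0⟩ : ∃ t : ℤ, b + a * t = b % |a| := by
      rcases lt_or_gt_of_ne ha with h | h
      · exact ⟨b / |a|, by rw [Int.emod_def, abs_of_neg h]; ring⟩
      · exact ⟨-(b / |a|), by rw [Int.emod_def, abs_of_pos h]; ring⟩
    have hr0 : 0 ≤ b % |a| := Int.emod_nonneg b (ne_of_gt hma)
    have hr1 : b % |a| < |a| := Int.emod_lt_of_pos b hma
    have hsign : a * a.sign = |a| := by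
      rcases lt_or_gt_of_ne ha with h | h
      · rw [Int.sign_eq_neg_one_of_neg h, abs_of_neg h]; ring
      · rw [Int.sign_eq_one_of_pos h, abs_of_pos h]; ring
    obtain ⟨t, ht⟩ : ∃ t : ℤ, 2 * |b + a * t| ≤ |a| := by
      by_cases h2 : 2 * (b % |a|) ≤ |a|
      · exact ⟨t0, by rw [ht0, abs_of_nonneg hr0]; exact h2⟩
      · refine ⟨t0 - a.sign, ?_⟩
        have : b + a * (t0 - a.sign) = b % |a| - |a| := by
          rw [mul_sub, hsign]; linarith [ht0]
        rw [this, abs_of_nonpos (by linarith)]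
        linarith
    set b' := b + a * t with hb'
    set c' := a * t ^ 2 + 2 * b * t + c with hc'
    have hdet' : b' ^ 2 - a * c' = -D := by
      rw [hb', hc']; linear_combination hdet
    have hac' : a * c' = b' ^ 2 + D := by linarith
    have hacpos : 0 < a * c' := by nlinarith [sq_nonneg b']
    have equiv1 : ProperlyEquivalent a b c a b' c' := by
      apply step_equiv _ _ _ _ _ _ 1 t 0 1 (by ring) (by ring)
      · rw [hb']; ring
      · rw [hc']; ring
    by_cases hle : |a| ≤ |c'|
    · refine ⟨a, b', c', hdet', ht, hle, ?_, equiv1⟩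
      have h1 : |a| * |a| ≤ |a| * |c'| := mul_le_mul_of_nonneg_left hle (le_of_lt hma)
      have h2 : |a| * |c'| = a * c' := by
        rw [← abs_mul]; exact abs_of_pos hacpos
      have h3 : 2 * |b'| * (2 * |b'|) ≤ |a| * |a| :=
        mul_le_mul ht ht (by positivity) (le_of_lt hma)
      have h4 : |a| * |a| = a ^ 2 := by rw [← abs_mul, abs_mul_self]; ring
      have h5 : |b'| * |b'| = b' ^ 2 := by rw [← abs_mul, abs_mul_self]; ring
      nlinarith
    · push_neg at hle
      have hc'0 : c' ≠ 0 := by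
        intro h; rw [h, mul_zero] at hacpos; exact lt_irrefl 0 hacpos
      have hlt : c'.natAbs < n := by
        rw [← hn]
        have : (c'.natAbs : ℤ) < (a.natAbs : ℤ) := by
          rwa [Int.abs_eq_natAbs, Int.abs_eq_natAbs] at hle
        exact_mod_cast this
      have hdet'' : (-b') ^ 2 - c' * a = -D := by linear_combination hdet'
      obtain ⟨A, B, C, g1, g2, g3, g4, g5⟩ := ih c'.natAbs hlt c' (-b') a rfl hdet''
      refine ⟨A, B, C, g1, g2, g3, g4, ?_⟩
      have swap : ProperlyEquivalent a b' c' c' (-b') a := by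
        apply step_equiv a b' c' c' (-b') a 0 (-1) 1 0 (by ring) (by ring) (by ring) (by ring)
      exact pe_trans equiv1 (pe_trans swap g5)

theorem stmt_9 (a b c D : ℤ) (hD : 0 < D) (hdet : b ^ 2 - a * c = -D) :
    ∃ A B C : ℤ, B ^ 2 - A * C = -D ∧
      2 * |B| ≤ |A| ∧ |A| ≤ |C| ∧ 3 * A ^ 2 ≤ 4 * D ∧
      ProperlyEquivalent a b c A B C :=
  key D hD a.natAbs a b c rfl hdet
end

section
/- Let (a,b,c) be a binary quadratic form whose determinant D = b² − a·c is a positive integer that is not a perfect square. Then there exists a form (A,B,C) of determinant D that is properly equivalent to (a,b,c) and is reduced, i.e., B > 0, B < √D, and |A| lies strictly between √D − B and √D + B. -/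
lemma transforms_det {a b c a' b' c' α β γ δ : ℤ}
    (h : Transforms a b c a' b' c' α β γ δ) :
    b' ^ 2 - a' * c' = (α * δ - β * γ) ^ 2 * (b ^ 2 - a * c) := by
  obtain ⟨h1, h2, h3⟩ := h
  subst h1 h2 h3; ring

lemma transforms_comp {a b c a' b' c' a'' b'' c'' α β γ δ α' β' γ' δ' : ℤ}
    (h : Transforms a b c a' b' c' α β γ δ)
    (h' : Transforms a' b' c' a'' b'' c'' α' β' γ' δ') :
    Transforms a b c a'' b'' c''
      (α * α' + β * γ') (α * β' + β * δ') (γ * α' + δ * γ') (γ * β' + δ * δ') := by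
  obtain ⟨h1, h2, h3⟩ := h
  obtain ⟨h1', h2', h3'⟩ := h'
  subst h1 h2 h3 h1' h2' h3'
  refine ⟨by ring, by ring, by ring⟩

lemma properlyEquivalent_trans {a b c a' b' c' a'' b'' c'' : ℤ}
    (h : ProperlyEquivalent a b c a' b' c')
    (h' : ProperlyEquivalent a' b' c' a'' b'' c'') :
    ProperlyEquivalent a b c a'' b'' c'' := by
  obtain ⟨⟨α, β, γ, δ, ht, hd⟩, ⟨α2, β2, γ2, δ2, ht2, hd2⟩⟩ := h
  obtain ⟨⟨α', β', γ', δ', ht', hd'⟩, ⟨α2', β2', γ2', δ2', ht2', hd2'⟩⟩ := h'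
  constructor
  · exact ⟨_, _, _, _, transforms_comp ht ht', by nlinarith [hd, hd']⟩
  · exact ⟨_, _, _, _, transforms_comp ht2' ht2, by nlinarith [hd2, hd2']⟩

/-- One reduction step: `(a,b,c)` goes to `(c, -b + c δ, a - 2 b δ + c δ²)`. -/
lemma step_equiv_s10 (a b c δ : ℤ) :
    ProperlyEquivalent a b c c (-b + c * δ) (a - 2 * b * δ + c * δ ^ 2) := by
  constructor
  · refine ⟨0, -1, 1, δ, ⟨by ring, by ring, by ring⟩, by ring⟩
  · refine ⟨δ, 1, -1, 0, ⟨by ring, by ring, by ring⟩, by ring⟩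

lemma nonsquare_facts {D : ℤ} (hD : 0 < D) (hns : ¬ IsSquare D) :
    ∀ x : ℤ, x ^ 2 ≠ D := by
  intro x hx
  exact hns ⟨x, by rw [← hx]; ring⟩

set_option maxHeartbeats 1000000 in
/-- Main descent lemma: any form of nonsquare positive determinant `D` with
`c ≠ 0` is properly equivalent to a reduced one. -/
lemma reduce (D : ℤ) (hD : 0 < D) (hns : ¬ IsSquare D) :
    ∀ n : ℕ, ∀ a b c : ℤ, c.natAbs ≤ n → b ^ 2 - a * c = D →
    ∃ A B C : ℤ, B ^ 2 - A * C = D ∧ 0 < B ∧ B ^ 2 < D ∧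
      D < (|A| + B) ^ 2 ∧ A ^ 2 < D ∧ ProperlyEquivalent a b c A B C := by
  intro n
  induction n using Nat.strong_induction_on with
  | _ n ih =>
    intro a b c hcn hdet
    have hsq := nonsquare_facts hD hns
    have hc0 : c ≠ 0 := by
      intro h; exact hsq b (by rw [← hdet, h]; ring)
    have hm0 : (0 : ℤ) < |c| := abs_pos.mpr hc0
    -- k = floor of sqrt D
    set k : ℤ := (Nat.sqrt D.toNat : ℤ) with hk
    have hk0 : 0 ≤ k := Int.ofNat_nonneg _
    have hk2 : k ^ 2 ≤ D := by
      have h := Nat.sqrt_le' D.toNat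
      have h2 : ((Nat.sqrt D.toNat : ℕ) : ℤ) ^ 2 ≤ (D.toNat : ℤ) := by exact_mod_cast h
      rwa [Int.toNat_of_nonneg hD.le] at h2
    have hk2' : D < (k + 1) ^ 2 := by
      have h := Nat.lt_succ_sqrt' D.toNat
      have h2 : (D.toNat : ℤ) < ((Nat.succ (Nat.sqrt D.toNat) : ℕ) : ℤ) ^ 2 := by exact_mod_cast h
      rw [Int.toNat_of_nonneg hD.le] at h2
      have : ((Nat.succ (Nat.sqrt D.toNat) : ℕ) : ℤ) = k + 1 := by push_cast [hk]; ring
      rwa [this] at h2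
    have hkD : k ^ 2 < D := lt_of_le_of_ne hk2 (hsq k)
    rcases lt_or_ge (c ^ 2) D with hlt | hge
    · -- final step : c² < D, produce reduced form
      have hck : |c| ≤ k := by
        by_contra h
        push_neg at h
        nlinarith [sq_abs c]
      set r : ℤ := (k + b) % |c| with hr
      have hr0 : 0 ≤ r := Int.emod_nonneg _ (ne_of_gt hm0)
      have hr1 : r < |c| := Int.emod_lt_of_pos _ hm0
      set B : ℤ := k - r with hB
      have hdvd : c ∣ (B + b) := by
        have h1 : |c| ∣ (k + b - r) :=
          ⟨(k + b) / |c|, by have := Int.mul_ediv_add_emod (k + b) |c|; rw [hB] at *; linarith⟩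
        have h2 : c ∣ (k + b - r) := (abs_dvd _ _).mp h1
        have hEq : B + b = k + b - r := by rw [hB]; ring
        rw [hEq]; exact h2
      obtain ⟨δ, hδ⟩ := hdvd
      have hBval : -b + c * δ = B := by linarith [hδ]
      refine ⟨c, B, a - 2 * b * δ + c * δ ^ 2, ?_, ?_, ?_, ?_, ?_, ?_⟩
      · have := step_equiv_s10 a b c δ
        obtain ⟨⟨α, β, γ, dd, ht, hd1⟩, -⟩ := this
        have hdet2 := transforms_det ht
        rw [hd1, hdet, hBval] at hdet2
        simpa using hdet2
      · -- 0 < B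
        have : k - r ≥ k - |c| + 1 := by omega
        omega
      · -- B² < D
        have hB0 : 0 < B := by omega
        have hBk : B ≤ k := by omega
        have h4 := pow_le_pow_left₀ hB0.le hBk 2
        linarith
      · -- D < (|c| + B)²
        have : k + 1 ≤ |c| + B := by omega
        nlinarith
      · nlinarith [sq_abs c]
      · have := step_equiv_s10 a b c δ
        rwa [hBval] at this
    · -- descent step : c² ≥ D (hence > since nonsquare); reduce |c|
      have hgt : D < c ^ 2 := lt_of_le_of_ne hge (fun h => hsq c h.symm)
      set r : ℤ := (-b) % |c| with hr
      have hr0 : 0 ≤ r := Int.emod_nonneg _ (ne_of_gt hm0)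
      have hr1 : r < |c| := Int.emod_lt_of_pos _ hm0
      set B : ℤ := if 2 * r ≤ |c| then r else r - |c| with hB
      have hBabs : 2 * |B| ≤ |c| := by
        rw [hB]; split_ifs with h
        · rw [abs_of_nonneg hr0]; exact h
        · rw [abs_of_nonpos (by omega)]; omega
      have hdvd : c ∣ (B + b) := by
        have h1 : |c| ∣ (r + b) := by
          have : |c| ∣ (-b - r) :=
            ⟨(-b)/|c|, by linarith [Int.mul_ediv_add_emod (-b) |c|]⟩
          obtain ⟨t, ht⟩ := this
          exact ⟨-t, by linarith⟩
        have h2 : |c| ∣ (B + b) := by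
          rw [hB]; split_ifs
          · exact h1
          · obtain ⟨t, ht⟩ := h1
            exact ⟨t - 1, by rw [mul_sub]; omega⟩
        exact (abs_dvd _ _).mp h2
      obtain ⟨δ, hδ⟩ := hdvd
      have hBval : -b + c * δ = B := by linarith [hδ]
      set c'' : ℤ := a - 2 * b * δ + c * δ ^ 2 with hc''
      have hstep := step_equiv_s10 a b c δ
      rw [hBval] at hstep
      have hdet'' : B ^ 2 - c * c'' = D := by
        obtain ⟨⟨α, β, γ, dd, ht, hd1⟩, -⟩ := step_equiv_s10 a b c δ
        have hdet2 := transforms_det ht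
        rw [hd1, hdet, hBval] at hdet2
        simpa using hdet2
      -- |c''| < |c|
      have hcc : |c''| < |c| := by
        have h1 : c * c'' = B ^ 2 - D := by linarith
        have h2 : |c| * |c''| = |B ^ 2 - D| := by rw [← abs_mul, h1]
        have h4B : 4 * B ^ 2 ≤ c ^ 2 := by
          nlinarith [sq_abs B, sq_abs c, abs_nonneg B, abs_nonneg c, hBabs]
        have h3 : |B ^ 2 - D| < c ^ 2 := by
          rw [abs_lt]
          constructor
          · nlinarith [sq_nonneg B]
          · linarith
        by_contra h
        push_neg at h
        have h5 : |c| * |c| ≤ |c| * |c''| := mul_le_mul_of_nonneg_left h (abs_nonneg c)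
        nlinarith [sq_abs c]
      have hnatlt : c''.natAbs < n := by
        have h1 : c''.natAbs < c.natAbs := by
          have := Int.natAbs_lt_natAbs_of_nonneg_of_lt (abs_nonneg c'') hcc
          simpa [Int.natAbs_abs] using this
        omega
      have hdetnew : B ^ 2 - c * c'' = D := hdet''
      obtain ⟨A', B', C', hd', hB', hB2', hAB', hA2', heq'⟩ :=
        ih c''.natAbs hnatlt c B c'' le_rfl hdetnew
      exact ⟨A', B', C', hd', hB', hB2', hAB', hA2',
        properlyEquivalent_trans hstep heq'⟩

theorem stmt_10 (a b c D : ℤ) (hD : 0 < D) (hns : ¬ IsSquare D)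
    (hdet : b ^ 2 - a * c = D) :
    ∃ A B C : ℤ, B ^ 2 - A * C = D ∧ 0 < B ∧
      (B : ℝ) < Real.sqrt D ∧
      Real.sqrt D - B < |(A : ℝ)| ∧ |(A : ℝ)| < Real.sqrt D + B ∧
      ProperlyEquivalent a b c A B C := by
  obtain ⟨A, B, C, hd, hB, hB2, hAB, hA2, heq⟩ :=
    reduce D hD hns c.natAbs a b c le_rfl hdet
  have hDR : (0:ℝ) < (D:ℝ) := by exact_mod_cast hD
  have habs : |(A : ℝ)| = ((|A| : ℤ) : ℝ) := (Int.cast_abs).symm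
  refine ⟨A, B, C, hd, hB, ?_, ?_, ?_, heq⟩
  · rw [Real.lt_sqrt (by exact_mod_cast hB.le)]
    exact_mod_cast hB2
  · rw [sub_lt_iff_lt_add, habs]
    have h1 : Real.sqrt D < ((|A| + B : ℤ) : ℝ) := by
      rw [Real.sqrt_lt' (by exact_mod_cast (by positivity : (0:ℤ) < |A| + B))]
      exact_mod_cast hAB
    push_cast at h1 ⊢
    linarith
  · have h1 : |(A:ℝ)| < Real.sqrt D := by
      rw [habs, Real.lt_sqrt (by exact_mod_cast abs_nonneg A)]
      have : (|A|:ℤ)^2 = A^2 := sq_abs A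
      exact_mod_cast this ▸ hA2
    have : (0:ℝ) < B := by exact_mod_cast hB
    linarith
end

section
/- Let (a,b,c) be a primitive binary quadratic form with determinant D = b² − a·c, and let p be a prime dividing D. If m and m₁ are integers represented by (a,b,c), neither of which is divisible by p, then m is a quadratic residue modulo p if and only if m₁ is a quadratic residue modulo p; that is, the integers coprime to p represented by the form are either all quadratic residues of p or all quadratic non-residues of p. -/
lemma aux_sq_iff {q : ℕ} [Fact q.Prime] (u v X : ZMod q)
    (hprod : u * v = X ^ 2) (hu : u ≠ 0) (hv : v ≠ 0) :
    (∃ t : ZMod q, t ^ 2 = u) → (∃ t : ZMod q, t ^ 2 = v) := by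
  rintro ⟨t, rfl⟩
  have ht : t ≠ 0 := by rintro rfl; simp at hu
  refine ⟨X * t⁻¹, ?_⟩
  rw [mul_pow, inv_pow, ← hprod, mul_comm (t ^ 2) v, mul_assoc,
    mul_inv_cancel₀ (pow_ne_zero 2 ht), mul_one]

theorem stmt_12 (a b c p m m₁ : ℤ) (hp : Prime p)
    (hprim : Int.gcd a (Int.gcd b c) = 1)
    (hpD : p ∣ b ^ 2 - a * c)
    (hm : ∃ g h : ℤ, m = a * g ^ 2 + 2 * b * g * h + c * h ^ 2)
    (hm₁ : ∃ g h : ℤ, m₁ = a * g ^ 2 + 2 * b * g * h + c * h ^ 2)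
    (hpm : ¬ p ∣ m) (hpm₁ : ¬ p ∣ m₁) :
    (∃ t : ℤ, t ^ 2 ≡ m [ZMOD p]) ↔ (∃ t : ℤ, t ^ 2 ≡ m₁ [ZMOD p]) := by
  obtain ⟨g, h, hm⟩ := hm
  obtain ⟨G, H, hm₁⟩ := hm₁
  set q := p.natAbs with hq
  haveI : Fact q.Prime := ⟨Int.prime_iff_natAbs_prime.mp hp⟩
  have hqp : (q : ℤ) ∣ p := Int.natAbs_dvd.mpr dvd_rfl
  have hpq : p ∣ (q : ℤ) := Int.dvd_natAbs.mpr dvd_rfl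
  -- translate ModEq conditions to ZMod q
  have key : ∀ x : ℤ,
      ((∃ t : ℤ, t ^ 2 ≡ x [ZMOD p]) ↔ ∃ u : ZMod q, u ^ 2 = (x : ZMod q)) := by
    intro x
    constructor
    · rintro ⟨t, ht⟩
      refine ⟨(t : ZMod q), ?_⟩
      have h2 : ((t ^ 2 : ℤ) : ZMod q) = ((x : ℤ) : ZMod q) := by
        rw [ZMod.intCast_eq_intCast_iff']
        exact ht.of_dvd hqp
      push_cast at h2
      exact h2
    · rintro ⟨u, hu⟩
      refine ⟨(u.val : ℤ), ?_⟩
      have h2 : (((u.val : ℤ) ^ 2 : ℤ) : ZMod q) = ((x : ℤ) : ZMod q) := by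
        push_cast
        rw [ZMod.natCast_val, ZMod.cast_id]
        exact hu
      rw [ZMod.intCast_eq_intCast_iff'] at h2
      exact Int.ModEq.of_dvd hpq h2
  -- nonvanishing in ZMod q
  have hne : ∀ x : ℤ, ¬ p ∣ x → ((x : ZMod q) ≠ 0) := fun x hx hx0 =>
    hx (dvd_trans hpq ((ZMod.intCast_zmod_eq_zero_iff_dvd x q).mp hx0))
  -- the composition identity
  have hid : m * m₁ = (a * g * G + b * (g * H + h * G) + c * h * H) ^ 2
      - (b ^ 2 - a * c) * (g * H - h * G) ^ 2 := by
    subst hm hm₁; ring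
  have hD0 : ((b ^ 2 - a * c : ℤ) : ZMod q) = 0 :=
    (ZMod.intCast_zmod_eq_zero_iff_dvd _ q).mpr (dvd_trans hqp hpD)
  have hprod : (m : ZMod q) * (m₁ : ZMod q) =
      ((a * g * G + b * (g * H + h * G) + c * h * H : ℤ) : ZMod q) ^ 2 := by
    have h3 : ((m * m₁ : ℤ) : ZMod q) = (((a * g * G + b * (g * H + h * G) + c * h * H) ^ 2
      - (b ^ 2 - a * c) * (g * H - h * G) ^ 2 : ℤ) : ZMod q) := by rw [hid]
    push_cast at h3 ⊢
    rw [h3]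
    push_cast at hD0
    rw [hD0]
    ring
  rw [key m, key m₁]
  constructor
  · exact aux_sq_iff _ _ _ hprod (hne m hpm) (hne m₁ hpm₁)
  · exact aux_sq_iff _ _ _ (by rw [mul_comm]; exact hprod) (hne m₁ hpm₁) (hne m hpm)
end

section
/- Let (a,b,c) be a binary quadratic form whose determinant D = b² − a·c satisfies D ≡ 3 (mod 4). If m and m' are odd integers represented by (a,b,c), then m·m' ≡ 1 (mod 4); equivalently, the odd integers represented by the form are either all ≡ 1 (mod 4) or all ≡ 3 (mod 4). -/
private lemma aux13 : ∀ a b c g h g' h' : ZMod 4,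
    b ^ 2 - a * c = 3 →
    (a * g ^ 2 + 2 * b * g * h + c * h ^ 2 = 1 ∨
     a * g ^ 2 + 2 * b * g * h + c * h ^ 2 = 3) →
    (a * g' ^ 2 + 2 * b * g' * h' + c * h' ^ 2 = 1 ∨
     a * g' ^ 2 + 2 * b * g' * h' + c * h' ^ 2 = 3) →
    (a * g ^ 2 + 2 * b * g * h + c * h ^ 2) *
      (a * g' ^ 2 + 2 * b * g' * h' + c * h' ^ 2) = 1 := by decide

private lemma odd13 (m : ℤ) (h : Odd m) : (m : ZMod 4) = 1 ∨ (m : ZMod 4) = 3 := by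
  obtain ⟨k, rfl⟩ := h
  push_cast
  have h4 : ∀ x : ZMod 4, x = 0 ∨ x = 1 ∨ x = 2 ∨ x = 3 := by decide
  have := h4 (k : ZMod 4)
  rcases this with h | h | h | h <;> rw [h] <;> decide

theorem stmt_13 (a b c m m' : ℤ)
    (hD : b ^ 2 - a * c ≡ 3 [ZMOD 4])
    (hm : ∃ g h : ℤ, m = a * g ^ 2 + 2 * b * g * h + c * h ^ 2)
    (hm' : ∃ g h : ℤ, m' = a * g ^ 2 + 2 * b * g * h + c * h ^ 2)
    (hmo : Odd m) (hm'o : Odd m') :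
    m * m' ≡ 1 [ZMOD 4] := by
  obtain ⟨g, h, rfl⟩ := hm
  obtain ⟨g', h', rfl⟩ := hm'
  have h1 := odd13 _ hmo
  have h2 := odd13 _ hm'o
  have hD2 := (ZMod.intCast_eq_intCast_iff _ _ 4).mpr hD
  apply (ZMod.intCast_eq_intCast_iff _ _ 4).mp
  push_cast at h1 h2 hD2 ⊢
  exact aux13 a b c g h g' h' hD2 h1 h2
end

section
/- Let (a,b,c) be a binary quadratic form whose determinant D = b² − a·c is divisible by 8. If m and m' are odd integers represented by (a,b,c), then m·m' ≡ 1 (mod 8); equivalently, all odd integers represented by the form lie in a single residue class modulo 8 (all ≡ 1, all ≡ 3, all ≡ 5, or all ≡ 7 mod 8). -/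
theorem stmt_14 (a b c m m' : ℤ)
    (hD : (8 : ℤ) ∣ b ^ 2 - a * c)
    (hm : ∃ g h : ℤ, m = a * g ^ 2 + 2 * b * g * h + c * h ^ 2)
    (hm' : ∃ g h : ℤ, m' = a * g ^ 2 + 2 * b * g * h + c * h ^ 2)
    (hmo : Odd m) (hm'o : Odd m') :
    m * m' ≡ 1 [ZMOD 8] := by
  obtain ⟨g, h, rfl⟩ := hm
  obtain ⟨g', h', rfl⟩ := hm'
  set t : ℤ := a * g * g' + b * (g * h' + h * g') + c * h * h' with ht
  set s : ℤ := g * h' - h * g' with hs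
  have key : (a * g ^ 2 + 2 * b * g * h + c * h ^ 2) *
      (a * g' ^ 2 + 2 * b * g' * h' + c * h' ^ 2)
      = t ^ 2 - (b ^ 2 - a * c) * s ^ 2 := by ring
  have hto : Odd t := by
    rcases Int.even_or_odd t with he | ho
    · exfalso
      have h1 : Odd (t ^ 2 - (b ^ 2 - a * c) * s ^ 2) := by
        rw [← key]; exact hmo.mul hm'o
      have h2 : Even (t ^ 2 - (b ^ 2 - a * c) * s ^ 2) := by
        have hev : Even (b ^ 2 - a * c) :=
          even_iff_two_dvd.mpr (dvd_trans ⟨4, by norm_num⟩ hD)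
        have h3 : Even (t ^ 2) := by
          obtain ⟨r, hr⟩ := he
          exact ⟨2*r^2, by rw [hr]; ring⟩
        exact h3.sub (hev.mul_right _)
      exact (Int.not_odd_iff_even.mpr h2) h1
    · exact ho
  obtain ⟨k, hk⟩ := hto
  obtain ⟨j, hj⟩ := Int.even_mul_succ_self k
  obtain ⟨d, hd⟩ := hD
  have hmain : (8 : ℤ) ∣ (a * g ^ 2 + 2 * b * g * h + c * h ^ 2) *
      (a * g' ^ 2 + 2 * b * g' * h' + c * h' ^ 2) - 1 := by
    refine ⟨j - d * s ^ 2, ?_⟩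
    rw [key, hd, hk]
    have : k * (k + 1) = 2 * j := by linarith [hj]
    nlinarith [this]
  exact (Int.modEq_iff_dvd.mpr hmain).symm
end

section
/- Let (a,b,c) be a binary quadratic form whose determinant D = b² − a·c satisfies D ≡ 2 (mod 8). If m and m' are odd integers represented by (a,b,c), then m·m' ≡ 1 (mod 8) or m·m' ≡ 7 (mod 8); equivalently, the odd integers represented by the form all lie in the pair of classes {1, 7} modulo 8, or all lie in the pair of classes {3, 5} modulo 8. -/
lemma key8 : ∀ t u k : ZMod 8, t ^ 2 - 2 * u ^ 2 = 2 * k + 1 →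
    t ^ 2 - 2 * u ^ 2 = 1 ∨ t ^ 2 - 2 * u ^ 2 = 7 := by decide

theorem stmt_15 (a b c m m' : ℤ)
    (hD : b ^ 2 - a * c ≡ 2 [ZMOD 8])
    (hm : ∃ g h : ℤ, m = a * g ^ 2 + 2 * b * g * h + c * h ^ 2)
    (hm' : ∃ g h : ℤ, m' = a * g ^ 2 + 2 * b * g * h + c * h ^ 2)
    (hmo : Odd m) (hm'o : Odd m') :
    m * m' ≡ 1 [ZMOD 8] ∨ m * m' ≡ 7 [ZMOD 8] := by
  obtain ⟨g, h, rfl⟩ := hm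
  obtain ⟨g', h', rfl⟩ := hm'
  obtain ⟨k, hk⟩ := hmo.mul hm'o
  have hD' : ((b ^ 2 - a * c : ℤ) : ZMod 8) = 2 := by
    have := (ZMod.intCast_eq_intCast_iff _ _ _).mpr hD
    push_cast at this ⊢; exact this
  have hD2 : (b : ZMod 8) ^ 2 - (a : ZMod 8) * c = 2 := by push_cast at hD'; exact hD'
  set T : ZMod 8 := ((a : ZMod 8) * g * g' + b * (g * h' + h * g') + c * (h * h')) with hT
  set U : ZMod 8 := ((g : ZMod 8) * h' - h * g') with hU
  have hcast : (((a * g ^ 2 + 2 * b * g * h + c * h ^ 2) *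
      (a * g' ^ 2 + 2 * b * g' * h' + c * h' ^ 2) : ℤ) : ZMod 8)
      = T ^ 2 - 2 * U ^ 2 := by
    rw [hT, hU]; push_cast
    linear_combination (-((g : ZMod 8) * h' - h * g') ^ 2) * hD2
  have hk8 : T ^ 2 - 2 * U ^ 2 = 2 * (k : ZMod 8) + 1 := by
    rw [← hcast, hk]; push_cast; ring
  rcases key8 T U _ hk8 with h1 | h7
  · left
    refine (ZMod.intCast_eq_intCast_iff _ _ _).mp ?_
    rw [hcast, h1]; norm_num
  · right
    refine (ZMod.intCast_eq_intCast_iff _ _ _).mp ?_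
    rw [hcast, h7]; norm_num
end

section
/- Let (a,b,c) be a binary quadratic form whose determinant D = b² − a·c satisfies D ≡ 6 (mod 8). If m and m' are odd integers represented by (a,b,c), then m·m' ≡ 1 (mod 8) or m·m' ≡ 3 (mod 8); equivalently, the odd integers represented by the form all lie in the pair of classes {1, 3} modulo 8, or all lie in the pair of classes {5, 7} modulo 8. -/
private lemma aux_sq : ∀ K : ZMod 8, (2*K+1)^2 = 1 := by decide

set_option maxHeartbeats 4000000 in
private lemma aux_key : ∀ X H X' H' T : ZMod 8,
    (X^2-6*H^2)*(X'^2-6*H'^2) = 2*T+1 →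
    (X^2-6*H^2)*(X'^2-6*H'^2) = 1 ∨ (X^2-6*H^2)*(X'^2-6*H'^2) = 3 := by decide

theorem stmt_16 (a b c m m' : ℤ)
    (hD : b ^ 2 - a * c ≡ 6 [ZMOD 8])
    (hm : ∃ g h : ℤ, m = a * g ^ 2 + 2 * b * g * h + c * h ^ 2)
    (hm' : ∃ g h : ℤ, m' = a * g ^ 2 + 2 * b * g * h + c * h ^ 2)
    (hmo : Odd m) (hm'o : Odd m') :
    m * m' ≡ 1 [ZMOD 8] ∨ m * m' ≡ 3 [ZMOD 8] := by
  obtain ⟨g, h, hg⟩ := hm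
  obtain ⟨g', h', hg'⟩ := hm'
  obtain ⟨s, hs⟩ := hmo.mul hm'o
  have hD8 : (b : ZMod 8)^2 - (a : ZMod 8) * c = 6 := by
    have := (ZMod.intCast_eq_intCast_iff _ _ _).mpr hD
    push_cast at this
    linear_combination this
  have hM : (m : ZMod 8) = a*(g:ZMod 8)^2+2*b*g*h+c*h^2 := by
    rw [hg]; push_cast; ring
  have hM' : (m' : ZMod 8) = a*(g':ZMod 8)^2+2*b*g'*h'+c*h'^2 := by
    rw [hg']; push_cast; ring
  have hS : ((m:ZMod 8)) * (m' : ZMod 8) = 2*(s:ZMod 8)+1 := by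
    exact_mod_cast congrArg (fun z : ℤ => (z : ZMod 8)) hs
  suffices hkey : ((m:ZMod 8)) * (m' : ZMod 8) = 1 ∨ ((m:ZMod 8)) * (m' : ZMod 8) = 3 by
    rcases hkey with hk | hk
    · exact Or.inl ((ZMod.intCast_eq_intCast_iff (m*m') 1 8).mp (by push_cast; rw [hk]))
    · exact Or.inr ((ZMod.intCast_eq_intCast_iff (m*m') 3 8).mp (by push_cast; rw [hk]))
  rcases Int.even_or_odd a with ha | ha
  · -- a even, so c must be odd
    have hc : Odd c := by
      by_contra hco
      rw [Int.not_odd_iff_even] at hco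
      have : Even m := by
        rw [hg]
        exact ((ha.mul_right _).add ((even_two.mul_right b).mul_right _ |>.mul_right _)).add
          (hco.mul_right _)
      exact (Int.not_odd_iff_even.mpr this) (hg ▸ hmo)
    obtain ⟨k, hk⟩ := hc
    have hC2 : ((c : ZMod 8))^2 = 1 := by
      have : (c : ZMod 8) = 2*(k:ZMod 8)+1 := by rw [hk]; push_cast; ring
      rw [this]; exact aux_sq _
    have e1 : (c:ZMod 8) * m = ((b:ZMod 8)*g+c*h)^2 - 6*g^2 := by
      linear_combination (c:ZMod 8) * hM - (g:ZMod 8)^2 * hD8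
    have e2 : (c:ZMod 8) * m' = ((b:ZMod 8)*g'+c*h')^2 - 6*g'^2 := by
      linear_combination (c:ZMod 8) * hM' - (g':ZMod 8)^2 * hD8
    have e3 : ((m:ZMod 8)) * m' = (((b:ZMod 8)*g+c*h)^2 - 6*g^2) * (((b:ZMod 8)*g'+c*h')^2 - 6*g'^2) := by
      calc ((m:ZMod 8)) * m' = ((c:ZMod 8)^2) * (m * m') := by rw [hC2]; ring
      _ = ((c:ZMod 8)*m) * ((c:ZMod 8)*m') := by ring
      _ = _ := by rw [e1, e2]
    rw [e3]
    exact aux_key _ _ _ _ s (by rw [← e3]; exact hS)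
  · obtain ⟨k, hk⟩ := ha
    have hA2 : ((a : ZMod 8))^2 = 1 := by
      have : (a : ZMod 8) = 2*(k:ZMod 8)+1 := by rw [hk]; push_cast; ring
      rw [this]; exact aux_sq _
    have e1 : (a:ZMod 8) * m = ((a:ZMod 8)*g+b*h)^2 - 6*h^2 := by
      linear_combination (a:ZMod 8) * hM - (h:ZMod 8)^2 * hD8
    have e2 : (a:ZMod 8) * m' = ((a:ZMod 8)*g'+b*h')^2 - 6*h'^2 := by
      linear_combination (a:ZMod 8) * hM' - (h':ZMod 8)^2 * hD8
    have e3 : ((m:ZMod 8)) * m' = (((a:ZMod 8)*g+b*h)^2 - 6*h^2) * (((a:ZMod 8)*g'+b*h')^2 - 6*h'^2) := by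
      calc ((m:ZMod 8)) * m' = ((a:ZMod 8)^2) * (m * m') := by rw [hA2]; ring
      _ = ((a:ZMod 8)*m) * ((a:ZMod 8)*m') := by ring
      _ = _ := by rw [e1, e2]
    rw [e3]
    exact aux_key _ _ _ _ s (by rw [← e3]; exact hS)
end

section
/- Let p be an odd prime, μ ≥ 1, and set m = p^μ. Let (a,b,c) be a binary quadratic form such that m divides the determinant b² − a·c, and suppose p does not divide a. If M is an integer such that a·M is a quadratic residue modulo m (i.e., there exists an integer g with g² ≡ a·M (mod m)), then M·(a,b,c) is a quadratic residue modulo m, i.e., there exist integers g, h with g² ≡ a·M (mod m), g·h ≡ b·M (mod m) and h² ≡ c·M (mod m). -/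
theorem stmt_18 (p : ℤ) (hp : Prime p) (hodd : Odd p) (μ : ℕ) (hμ : 1 ≤ μ)
    (m : ℤ) (hm : m = p ^ μ)
    (a b c M : ℤ) (hdvd : m ∣ b ^ 2 - a * c) (hpa : ¬ p ∣ a)
    (hres : ∃ g : ℤ, g ^ 2 ≡ a * M [ZMOD m]) :
    ∃ g h : ℤ, g ^ 2 ≡ a * M [ZMOD m] ∧ g * h ≡ b * M [ZMOD m] ∧
      h ^ 2 ≡ c * M [ZMOD m] := by
  obtain ⟨g, hg⟩ := hres
  have hcop : IsCoprime a m := by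
    rw [hm]
    exact IsCoprime.pow_right ((hp.coprime_iff_not_dvd).mpr hpa).symm
  obtain ⟨u, v, huv⟩ := hcop
  have hu : u * a ≡ 1 [ZMOD m] := by
    have : u * a - 1 = -v * m := by linarith
    exact Int.ModEq.symm (Int.modEq_iff_dvd.mpr ⟨-v, by linarith⟩)
  have hb2 : b ^ 2 ≡ a * c [ZMOD m] :=
    Int.ModEq.symm (Int.modEq_iff_dvd.mpr (by simpa using hdvd))
  refine ⟨g, u * b * g, hg, ?_, ?_⟩
  · calc g * (u * b * g) = u * a * (b * M) + u * b * (g ^ 2 - a * M) := by ring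
    _ ≡ 1 * (b * M) + u * b * 0 [ZMOD m] :=
        (hu.mul_right _).add ((Int.ModEq.refl _).mul (hg.sub_right _ |>.trans (by simp)))
    _ = b * M := by ring
  · calc (u * b * g) ^ 2 = u ^ 2 * b ^ 2 * g ^ 2 := by ring
    _ ≡ u ^ 2 * (a * c) * (a * M) [ZMOD m] := ((Int.ModEq.refl _).mul hb2).mul hg
    _ = (u * a) * (u * a) * (c * M) := by ring
    _ ≡ 1 * 1 * (c * M) [ZMOD m] := (hu.mul hu).mul_right _
    _ = c * M := by ring
end
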